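/- arXiv:2105.02367 — 2 statements merged into one kernel-verified Lean document; each statement's English description precedes it below -/
import Mathlib

section
/- Let $s, p$ be positive integers with $s \mid p$ and $m \ge 1$. Then the function $\chi(q) = (q - \gcd(q,s))\left((q-1)^{m-1} + p\sum_{k=1}^{m-1}(-1)^k(q-1)^{m-1-k}\right) + (-1)^m p$ is a quasi-polynomial in $q$ with minimum period exactly $s$. -/
/-!
Write `χ(q) = (q - gcd(q, s)) A(q) + c` with `A` monic of degree `m - 1`. On each residue class
mod `s` the value `gcd(q, s)` is constant, so `s` is a period. Conversely, let `ρ < s` be a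
period and `d = gcd(ρ, s) < s`. The class of `d` mod `ρ` contains infinitely many `q` with
`gcd(q, s) = d` (namely `q ≡ d` mod `ρ s`) and, by the Chinese remainder theorem, infinitely
many with `gcd(q, s) = s`. The single polynomial attached to that class would then equal both
`(X - d) A + c` and `(X - s) A + c`, forcing `d = s` since `A ≠ 0`.
-/

/-- `φ : ℤ_{>0} → ℤ` is a quasi-polynomial with period `ρ`: there are polynomials
`f^1, …, f^ρ` (indexed here by the residue `q % ρ`) with `φ(q) = f^{q mod ρ}(q)`
for all positive `q`. -/
def IsQPPeriod (φ : ℕ → ℤ) (ρ : ℕ) : Prop :=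
  0 < ρ ∧ ∃ f : ℕ → Polynomial ℤ, ∀ q : ℕ, 0 < q → φ q = (f (q % ρ)).eval (q : ℤ)

open Polynomial

noncomputable def chiCofactor (p m : ℕ) : ℤ[X] :=
  (X - C 1) ^ (m - 1) +
    ∑ k ∈ Finset.Icc 1 (m - 1), C ((p : ℤ) * (-1) ^ k) * (X - C 1) ^ (m - 1 - k)

lemma eval_chiCofactor (p m : ℕ) (z : ℤ) :
    (chiCofactor p m).eval z = (z - 1) ^ (m - 1) +
      (p : ℤ) * ∑ k ∈ Finset.Icc 1 (m - 1), (-1 : ℤ) ^ k * (z - 1) ^ (m - 1 - k) := by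
  simp [chiCofactor, eval_finsetSum, Finset.mul_sum, mul_assoc]

lemma chiCofactor_monic (p m : ℕ) : (chiCofactor p m).Monic := by
  have hlead : ((X - C 1 : ℤ[X]) ^ (m - 1)).Monic := (monic_X_sub_C 1).pow _
  refine hlead.add_of_left ((degree_sum_le _ _).trans_lt ?_)
  rw [degree_pow, degree_X_sub_C, nsmul_one, Finset.sup_lt_iff (WithBot.bot_lt_coe _)]
  intro k hk
  rw [Finset.mem_Icc] at hk
  calc (C ((p : ℤ) * (-1) ^ k) * (X - C 1) ^ (m - 1 - k)).degree
      ≤ ((X - C 1 : ℤ[X]) ^ (m - 1 - k)).degree := by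
        rw [← smul_eq_C_mul]; exact degree_smul_le _ _
    _ = ↑(m - 1 - k) := by rw [degree_pow, degree_X_sub_C, nsmul_one]
    _ < ↑(m - 1) := by exact_mod_cast (by omega : m - 1 - k < m - 1)

lemma component_eq_of_eval_progression {φ : ℕ → ℤ} {ρ : ℕ} {f : ℕ → ℤ[X]}
    (hf : ∀ q, 0 < q → φ q = (f (q % ρ)).eval (q : ℤ)) {P : ℤ[X]} {q₀ N : ℕ}
    (hq₀ : 0 < q₀) (hN : 0 < N) (hρN : ρ ∣ N)
    (hP : ∀ t : ℕ, φ (q₀ + t * N) = P.eval ((q₀ + t * N : ℕ) : ℤ)) :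
    f (q₀ % ρ) = P := by
  refine eq_of_infinite_eval_eq _ _ (Set.infinite_of_injective_forall_mem
    (f := fun t : ℕ => ((q₀ + t * N : ℕ) : ℤ)) (fun a b hab => ?_) fun t => ?_)
  · simpa [hN.ne'] using hab
  · have hmod : (q₀ + t * N) % ρ = q₀ % ρ := by
      obtain ⟨k, rfl⟩ := hρN
      rw [show t * (ρ * k) = t * k * ρ by ring, Nat.add_mul_mod_self_right]
    rw [Set.mem_ofPred_eq, ← hP, hf _ (by positivity), hmod]

def gcdQuasiPoly (s : ℕ) (A : ℤ[X]) (c : ℤ) (q : ℕ) : ℤ :=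
  ((q : ℤ) - (Nat.gcd q s : ℤ)) * A.eval (q : ℤ) + c

lemma isQPPeriod_gcdQuasiPoly {s : ℕ} (hs : 0 < s) (A : ℤ[X]) (c : ℤ) :
    IsQPPeriod (gcdQuasiPoly s A c) s := by
  refine ⟨hs, fun r => (X - C (Nat.gcd r s : ℤ)) * A + C c, fun q _ => ?_⟩
  have hgcd : Nat.gcd (q % s) s = Nat.gcd q s := by rw [← Nat.gcd_rec, Nat.gcd_comm]
  simp [gcdQuasiPoly, hgcd]

lemma gcdQuasiPoly_eq_of_gcd_eq {s : ℕ} (A : ℤ[X]) (c : ℤ) {q g : ℕ} (hq : Nat.gcd q s = g) :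
    gcdQuasiPoly s A c q = ((X - C (g : ℤ)) * A + C c).eval (q : ℤ) := by
  simp [gcdQuasiPoly, hq]

lemma le_of_isQPPeriod_gcdQuasiPoly {s ρ : ℕ} {A : ℤ[X]} (hA : A ≠ 0) {c : ℤ}
    (h : IsQPPeriod (gcdQuasiPoly s A c) ρ) : s ≤ ρ := by
  obtain ⟨hρ, f, hf⟩ := h
  by_contra! hρs
  set d := Nat.gcd ρ s
  have hd : 0 < d := Nat.gcd_pos_of_pos_left s hρ
  have hds : d < s := (Nat.gcd_le_left s hρ).trans_lt hρs
  have hN : 0 < ρ * s := Nat.mul_pos hρ (hρ.trans hρs)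
  obtain ⟨q₁, hq₁ρ, hq₁s⟩ := Nat.chineseRemainder' (Nat.modEq_zero_iff_dvd.mpr (dvd_refl d))
  have hsq₁ : s ∣ q₁ := Nat.modEq_zero_iff_dvd.mp hq₁s
  have hclass_d : f (d % ρ) = (X - C (d : ℤ)) * A + C c :=
    component_eq_of_eval_progression hf hd hN (dvd_mul_right ρ s) fun t =>
      gcdQuasiPoly_eq_of_gcd_eq A c <| by
        rw [← mul_assoc, Nat.gcd_add_mul_right_left, Nat.gcd_eq_left (Nat.gcd_dvd_right ρ s)]
  have hclass_s : f (d % ρ) = (X - C (s : ℤ)) * A + C c := by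
    rw [← hq₁ρ, ← Nat.add_mul_mod_self_left q₁ ρ s]
    refine component_eq_of_eval_progression hf (by omega) hN (dvd_mul_right ρ s) fun t =>
      gcdQuasiPoly_eq_of_gcd_eq A c (Nat.gcd_eq_right ?_)
    exact (hsq₁.add (dvd_mul_left s ρ)).add (Dvd.intro_left (t * ρ) (by ring))
  have hcancel : (X - C (d : ℤ)) * A = (X - C (s : ℤ)) * A :=
    add_right_cancel (hclass_d.symm.trans hclass_s)
  have : (d : ℤ) = s := C_injective (sub_right_injective (mul_right_cancel₀ hA hcancel))
  omega

theorem stmt9_general (s p m : ℕ) (hs : 0 < s) :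
    IsQPPeriod
        (fun q : ℕ =>
          ((q : ℤ) - (Nat.gcd q s : ℤ)) *
              (((q : ℤ) - 1) ^ (m - 1) +
                (p : ℤ) *
                  ∑ k ∈ Finset.Icc 1 (m - 1), (-1 : ℤ) ^ k * ((q : ℤ) - 1) ^ (m - 1 - k)) +
            (-1 : ℤ) ^ m * (p : ℤ)) s ∧
      ∀ ρ : ℕ,
        IsQPPeriod
            (fun q : ℕ =>
              ((q : ℤ) - (Nat.gcd q s : ℤ)) *
                  (((q : ℤ) - 1) ^ (m - 1) +
                    (p : ℤ) *
                      ∑ k ∈ Finset.Icc 1 (m - 1), (-1 : ℤ) ^ k * ((q : ℤ) - 1) ^ (m - 1 - k)) +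
                (-1 : ℤ) ^ m * (p : ℤ)) ρ → s ≤ ρ := by
  have hχ : (fun q : ℕ =>
      ((q : ℤ) - (Nat.gcd q s : ℤ)) *
          (((q : ℤ) - 1) ^ (m - 1) +
            (p : ℤ) * ∑ k ∈ Finset.Icc 1 (m - 1), (-1 : ℤ) ^ k * ((q : ℤ) - 1) ^ (m - 1 - k)) +
        (-1 : ℤ) ^ m * (p : ℤ)) = gcdQuasiPoly s (chiCofactor p m) ((-1) ^ m * p) := by
    funext q
    rw [gcdQuasiPoly, eval_chiCofactor]
  rw [hχ]
  exact ⟨isQPPeriod_gcdQuasiPoly hs _ _,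
    fun ρ => le_of_isQPPeriod_gcdQuasiPoly (chiCofactor_monic p m).ne_zero⟩

/-- For positive integers `s ∣ p` and `m ≥ 1`, the function
`χ(q) = (q - gcd(q,s)) ((q-1)^{m-1} + p ∑_{k=1}^{m-1} (-1)^k (q-1)^{m-1-k}) + (-1)^m p`
is a quasi-polynomial in `q` with minimum period exactly `s`. -/
theorem stmt9 (s p m : ℕ) (hs : 0 < s) (hp : 0 < p) (hsp : s ∣ p) (hm : 1 ≤ m) :
    IsQPPeriod
        (fun q : ℕ =>
          ((q : ℤ) - (Nat.gcd q s : ℤ)) *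
              (((q : ℤ) - 1) ^ (m - 1) +
                (p : ℤ) *
                  ∑ k ∈ Finset.Icc 1 (m - 1), (-1 : ℤ) ^ k * ((q : ℤ) - 1) ^ (m - 1 - k)) +
            (-1 : ℤ) ^ m * (p : ℤ)) s ∧
      ∀ ρ : ℕ,
        IsQPPeriod
            (fun q : ℕ =>
              ((q : ℤ) - (Nat.gcd q s : ℤ)) *
                  (((q : ℤ) - 1) ^ (m - 1) +
                    (p : ℤ) *
                      ∑ k ∈ Finset.Icc 1 (m - 1), (-1 : ℤ) ^ k * ((q : ℤ) - 1) ^ (m - 1 - k)) +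
                (-1 : ℤ) ^ m * (p : ℤ)) ρ → s ≤ ρ :=
  stmt9_general s p m hs
end

section
/- Let $q > p \ge 1$ and $m \ge 1$ be integers. Then $\#\{x \in \{1,\dots,q-1\}^m : x_1 + \cdots + x_m \not\equiv r \pmod q \text{ for all } r \in \{1,\dots,p\}\}$ equals $\frac{(q-p)(q-1)^m + (-1)^m p}{q}$. -/
/-!
Reducing the entries modulo `q` identifies `{1, …, q-1}^m` with the tuples of nonzero residues,
so it suffices to count the tuples of nonzero elements of a finite abelian group `G` of order `n`
by the value `g` of their sum. Splitting off the first entry gives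
`N_{m+1}(g) = ∑_{s ≠ 0} N_m(g - s) = (n - 1)^m - N_m(g)`, and `N_0(g) = 0` for `g ≠ 0`, hence
`n N_m(g) = (n - 1)^m - (-1)^m` for every `g ≠ 0`. Removing the tuples whose sum lies in the
`p`-element set `{1, …, p}` from all `(n - 1)^m` tuples gives the formula.
-/

open Classical Finset

section NonzeroTuples

variable (G : Type*) [AddCommGroup G] [Fintype G] [DecidableEq G]

def nonzeroTuples (m : ℕ) : Finset (Fin m → G) :=
  Fintype.piFinset fun _ => univ.erase 0

variable {G}

lemma card_nonzeroTuples (m : ℕ) : #(nonzeroTuples G m) = (Fintype.card G - 1) ^ m := by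
  simp [nonzeroTuples, card_erase_of_mem]

lemma sum_card_nonzeroTuples_sum_eq (m : ℕ) :
    ∑ g : G, #{y ∈ nonzeroTuples G m | ∑ i, y i = g} = (Fintype.card G - 1) ^ m := by
  rw [← card_nonzeroTuples,
    card_eq_sum_card_fiberwise (f := fun y => ∑ i, y i) (t := univ) fun _ _ => mem_univ _]

lemma card_nonzeroTuples_succ_sum_eq (m : ℕ) (g : G) :
    #{y ∈ nonzeroTuples G (m + 1) | ∑ i, y i = g} =
      ∑ s ∈ univ.erase 0, #{z ∈ nonzeroTuples G m | ∑ i, z i = g - s} := by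
  rw [card_eq_sum_card_fiberwise (s := {y ∈ nonzeroTuples G (m + 1) | ∑ i, y i = g})
    (f := fun y => y 0) (t := univ.erase 0)
    fun y hy => Fintype.mem_piFinset.mp (mem_filter.mp hy).1 0]
  refine sum_congr rfl fun s hs => ?_
  rw [filter_filter]
  refine card_nbij' Fin.tail (fun z => Fin.cons s z) ?_ ?_ ?_ ?_
  · intro y hy
    simp only [coe_filter, Set.mem_ofPred_eq, nonzeroTuples, Fin.mem_piFinset_iff_zero_tail]
      at hy ⊢
    obtain ⟨⟨-, htail⟩, hsum, rfl⟩ := hy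
    refine ⟨htail, ?_⟩
    rw [← hsum, Fin.sum_univ_succ]
    simp [Fin.tail]
  · intro z hz
    simp_all [nonzeroTuples, Fin.sum_univ_succ, Fin.forall_fin_succ]
  · intro y hy
    simp only [coe_filter, Set.mem_ofPred_eq] at hy
    rw [← hy.2.2]
    exact Fin.cons_self_tail y
  · intro z _
    exact Fin.tail_cons _ _

lemma card_nonzeroTuples_succ_sum_eq_add (m : ℕ) (g : G) :
    #{y ∈ nonzeroTuples G (m + 1) | ∑ i, y i = g} +
      #{y ∈ nonzeroTuples G m | ∑ i, y i = g} =
      (Fintype.card G - 1) ^ m := by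
  rw [card_nonzeroTuples_succ_sum_eq, ← sum_card_nonzeroTuples_sum_eq m,
    ← (Equiv.subLeft g).sum_comp, ← add_sum_erase _ _ (mem_univ 0)]
  simp [add_comm]

lemma card_nonzeroTuples_sum_eq_mul_card (m : ℕ) {g : G} (hg : g ≠ 0) :
    (#{y ∈ nonzeroTuples G m | ∑ i, y i = g} : ℤ) * Fintype.card G =
      ((Fintype.card G : ℤ) - 1) ^ m - (-1) ^ m := by
  induction m with
  | zero => simp [hg.symm]
  | succ m ih =>
    have hrec := card_nonzeroTuples_succ_sum_eq_add m g
    zify [Fintype.card_pos (α := G)] at hrec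
    linear_combination (Fintype.card G : ℤ) * hrec - ih

lemma card_nonzeroTuples_sum_mem (m : ℕ) (S : Finset G) :
    #{y ∈ nonzeroTuples G m | ∑ i, y i ∈ S} =
      ∑ g ∈ S, #{y ∈ nonzeroTuples G m | ∑ i, y i = g} := by
  rw [card_eq_sum_card_fiberwise (s := {y ∈ nonzeroTuples G m | ∑ i, y i ∈ S})
    (f := fun y => ∑ i, y i) (t := S) fun y hy => (mem_filter.mp hy).2]
  refine sum_congr rfl fun g hg => ?_
  rw [filter_filter]
  exact congrArg card (filter_congr fun y _ => and_iff_right_of_imp fun h => h ▸ hg)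

lemma card_nonzeroTuples_sum_notMem_mul_card (m : ℕ) {S : Finset G} (hS : 0 ∉ S) :
    (#{y ∈ nonzeroTuples G m | ∑ i, y i ∉ S} : ℤ) * Fintype.card G =
      ((Fintype.card G : ℤ) - #S) * ((Fintype.card G : ℤ) - 1) ^ m + (-1) ^ m * #S := by
  have hsplit := card_filter_add_card_filter_not (s := nonzeroTuples G m) fun y => ∑ i, y i ∈ S
  rw [card_nonzeroTuples_sum_mem, card_nonzeroTuples] at hsplit
  zify [Fintype.card_pos (α := G)] at hsplit
  have hfiber : ∀ g ∈ S, (#{y ∈ nonzeroTuples G m | ∑ i, y i = g} : ℤ) * Fintype.card G =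
      ((Fintype.card G : ℤ) - 1) ^ m - (-1) ^ m :=
    fun g hg => card_nonzeroTuples_sum_eq_mul_card m (ne_of_mem_of_not_mem hg hS)
  have hsum : (∑ g ∈ S, (#{y ∈ nonzeroTuples G m | ∑ i, y i = g} : ℤ)) * Fintype.card G =
      #S * (((Fintype.card G : ℤ) - 1) ^ m - (-1) ^ m) := by
    rw [sum_mul, sum_congr rfl hfiber, sum_const, nsmul_eq_mul]
  linear_combination (Fintype.card G : ℤ) * hsplit - hsum

end NonzeroTuples

namespace ZMod

variable {q : ℕ} [NeZero q]

lemma val_mem_Icc_one_iff {a : ZMod q} : a.val ∈ Icc 1 (q - 1) ↔ a ≠ 0 := by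
  have := a.val_lt
  rw [mem_Icc, ← val_pos]
  omega

lemma card_filter_piFinset_Icc_one (m : ℕ) (P : ZMod q → Prop) [DecidablePred P] :
    #{x ∈ Fintype.piFinset fun _ : Fin m => Icc 1 (q - 1) | P ((∑ i, x i : ℕ) : ZMod q)} =
      #{y ∈ nonzeroTuples (ZMod q) m | P (∑ i, y i)} := by
  have hlt : ∀ n ∈ Icc 1 (q - 1), n < q := fun n hn => by have := mem_Icc.mp hn; omega
  refine card_nbij' (fun x i => (x i : ZMod q)) (fun y i => (y i).val) ?_ ?_ ?_ ?_
  · intro x hx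
    simp only [coe_filter, Set.mem_ofPred_eq, nonzeroTuples, Fintype.mem_piFinset, Nat.cast_sum]
      at hx ⊢
    refine ⟨fun i => ?_, hx.2⟩
    rw [mem_erase, ← val_mem_Icc_one_iff, val_cast_of_lt (hlt _ (hx.1 i))]
    exact ⟨hx.1 i, mem_univ _⟩
  · intro y hy
    simp only [coe_filter, Set.mem_ofPred_eq, nonzeroTuples, Fintype.mem_piFinset, mem_erase,
      Nat.cast_sum, natCast_zmod_val] at hy ⊢
    exact ⟨fun i => val_mem_Icc_one_iff.mpr (hy.1 i).1, hy.2⟩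
  · intro x hx
    funext i
    exact val_cast_of_lt (hlt _ (Fintype.mem_piFinset.mp (mem_filter.mp hx).1 i))
  · intro y _
    funext i
    exact natCast_zmod_val (y i)

end ZMod

theorem stmt19_general (p q m : ℕ) (hq : p < q) :
    (((Fintype.piFinset fun _ : Fin m => Finset.Icc 1 (q - 1)).filter fun x : Fin m → ℕ =>
          ∀ r ∈ Finset.Icc 1 p, ¬ (∑ i, x i) ≡ r [MOD q]).card : ℤ) =
      (((q : ℤ) - (p : ℤ)) * ((q : ℤ) - 1) ^ m + (-1 : ℤ) ^ m * (p : ℤ)) / (q : ℤ) := by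
  have : NeZero q := ⟨by omega⟩
  set S : Finset (ZMod q) := (Icc 1 p).image Nat.cast
  have hinj : Set.InjOn (Nat.cast : ℕ → ZMod q) (Icc 1 p) :=
    (CharP.natCast_injOn_Iio (ZMod q) q).mono fun r hr => (mem_Icc.mp hr).2.trans_lt hq
  have hS : #S = p := by rw [card_image_of_injOn hinj, Nat.card_Icc, Nat.add_sub_cancel]
  have h0 : (0 : ZMod q) ∉ S := by
    simp only [S, mem_image, mem_Icc, not_exists, not_and, ZMod.natCast_eq_zero_iff]
    exact fun r hr hdvd => by have := Nat.le_of_dvd hr.1 hdvd; omega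
  have hpred : ∀ s : ℕ, (∀ r ∈ Icc 1 p, ¬ s ≡ r [MOD q]) ↔ (s : ZMod q) ∉ S := by
    simp [S, ← ZMod.natCast_eq_natCast_iff, eq_comm]
  simp only [hpred]
  rw [ZMod.card_filter_piFinset_Icc_one m (· ∉ S)]
  have key := card_nonzeroTuples_sum_notMem_mul_card m h0
  rw [hS, ZMod.card] at key
  rw [← key, Int.mul_ediv_cancel _ (by exact_mod_cast NeZero.ne q)]

/-- For integers `q > p ≥ 1` and `m ≥ 1`, the number of `x ∈ {1, …, q-1}^m` with
`x₁ + ⋯ + x_m ≢ r (mod q)` for all `r ∈ {1, …, p}` equals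
`((q - p)(q - 1)^m + (-1)^m p) / q`. -/
theorem stmt19 (p q m : ℕ) (hp : 1 ≤ p) (hq : p < q) (hm : 1 ≤ m) :
    (((Fintype.piFinset fun _ : Fin m => Finset.Icc 1 (q - 1)).filter fun x : Fin m → ℕ =>
          ∀ r ∈ Finset.Icc 1 p, ¬ (∑ i, x i) ≡ r [MOD q]).card : ℤ) =
      (((q : ℤ) - (p : ℤ)) * ((q : ℤ) - 1) ^ m + (-1 : ℤ) ^ m * (p : ℤ)) / (q : ℤ) :=
  stmt19_general p q m hq
end
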